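/- There is an absolute constant c > 0 such that for every odd prime p and all f₁, f₂ : F_p → ℂ, ( Σ_{s ∈ F_p} | Σ_{n ∈ F_p, n ≠ 0} f̂₁(s − n) · f̂₂(n) · K(s − n, n) |² )^(1/2) ≤ c · p^(2/5) · ‖f₁‖₂ · ‖f₂‖₂, where K(x, y) = e_p(−x² · (4y)^{−1}) for y ≠ 0 and K(x, 0) = 0. -/

import Mathlib

open Finset

/-- `e_p(x) = exp(2πi x / p)` for `x : ZMod p`. -/
noncomputable def ep (p : ℕ) [NeZero p] (x : ZMod p) : ℂ :=
  Complex.exp (2 * (Real.pi : ℂ) * Complex.I * (x.val : ℂ) / (p : ℂ))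

/-- Normalized L²-norm. -/
noncomputable def nrm2 (p : ℕ) [NeZero p] (f : ZMod p → ℂ) : ℝ :=
  Real.sqrt ((1 / (p : ℝ)) * ∑ x : ZMod p, ‖f x‖ ^ 2)

/-- Fourier transform `f̂(z) = (1/p) Σ_x e_p(-xz) f(x)`. -/
noncomputable def ft (p : ℕ) [NeZero p] (f : ZMod p → ℂ) (z : ZMod p) : ℂ :=
  (1 / (p : ℂ)) * ∑ x : ZMod p, ep p (-(x * z)) * f x

/-- The quadratic kernel `K(x,y) = e_p(-x²(4y)⁻¹)` for `y ≠ 0`, `0` otherwise. -/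
noncomputable def Kq (p : ℕ) [NeZero p] (x y : ZMod p) : ℂ :=
  if y = 0 then 0 else ep p (-(x ^ 2 * (4 * y)⁻¹))

/-!
Expand the square and the two factors `f̂₁`, with summation variables `s`, `n, m` and `x, y`, and
substitute `n = m + d`, `s = t + m`, `y = x + w`. The sum over `s` becomes
`p⁻² Σ_{d,w} D(d,w) M(d,w)`, where `D(d,w) = Σ_x f₁(x) conj f₁(x+w) e_p(xd)` (`twistedCorr`) and
`M(d,·)` is the Fourier transform of
`Φ_d(t) = Σ_m f̂₂(m+d) conj f̂₂(m) K(t-d,m+d) conj K(t,m)` (`kernelCorr`).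
By Cauchy–Schwarz and Parseval it remains to bound `Σ_{d,t} |Φ_d(t)|²`. For `d ≠ 0` and `m ≠ m'`
the correlation over `t` of the two kernel products is a quadratic exponential sum with nonzero
linear coefficient, hence of size at most `√p`; this almost-orthogonality gives
`Σ_{d,t} |Φ_d(t)|² ≤ p (2 + √p) ‖f₂‖₂⁴`. Altogether the sum over `s` is at most
`(p (2 + √p))^{1/2} ‖f₁‖₂² ‖f₂‖₂² ≤ 4 p^{4/5} ‖f₁‖₂² ‖f₂‖₂²`.
-/

open ComplexConjugate

namespace AddChar

variable {R : Type*} [CommRing R] [Fintype R] {ψ : AddChar R ℂ}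

lemma sum_norm_sq_sum_mul_apply_mul (hψ : ψ.IsPrimitive) (F : R → ℂ) :
    ∑ d, ‖∑ x, F x * ψ (x * d)‖ ^ 2 = Fintype.card R * ∑ x, ‖F x‖ ^ 2 := by
  classical
  apply Complex.ofReal_injective
  push_cast
  simp_rw [← Complex.mul_conj', map_sum, map_mul, ← map_neg_eq_conj, sum_mul_sum]
  rw [sum_comm, mul_sum]
  refine sum_congr rfl fun y _ => ?_
  rw [sum_comm]
  have hphase : ∀ j x, F y * ψ (y * x) * (conj (F j) * ψ (-(j * x))) =
      F y * conj (F j) * ψ (x * (y - j)) := fun j x => by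
    rw [mul_mul_mul_comm, ← map_add_eq_mul, ← neg_mul, ← add_mul,
      ← sub_eq_add_neg, mul_comm (y - j)]
  simp only [hphase, ← mul_sum, sum_mulShift _ hψ, sub_eq_zero, Nat.cast_ite, CharP.cast_eq_zero,
    mul_ite, mul_zero, sum_ite_eq, mem_univ, if_true]
  ring

section Field

variable {F : Type*} [Field F] [Fintype F] {ψ : AddChar F ℂ}

lemma norm_sq_sum_quadratic (hψ : ψ.IsPrimitive) (h2 : (2 : F) ≠ 0) {a : F} (ha : a ≠ 0)
    (b : F) : ‖∑ t, ψ (a * t ^ 2 + b * t)‖ ^ 2 = Fintype.card F := by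
  classical
  apply Complex.ofReal_injective
  push_cast
  rw [← Complex.mul_conj', map_sum, sum_mul_sum, sum_comm]
  have hshift : ∀ u, ∑ t, ψ (a * t ^ 2 + b * t) * conj (ψ (a * u ^ 2 + b * u)) =
      ∑ h, ψ (a * h ^ 2 + b * h) * ψ (u * (2 * a * h)) := fun u => by
    refine (Fintype.sum_equiv (Equiv.addLeft u) _ _ fun h => ?_).symm
    rw [← map_neg_eq_conj, ← map_add_eq_mul, ← map_add_eq_mul, Equiv.coe_addLeft]
    ring_nf
  simp_rw [hshift]
  rw [sum_comm]
  simp_rw [← mul_sum, sum_mulShift _ hψ, mul_eq_zero, h2, ha, false_or]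
  simp

lemma norm_sum_quadratic_le (hψ : ψ.IsPrimitive) (h2 : (2 : F) ≠ 0) {a b : F}
    (hab : a ≠ 0 ∨ b ≠ 0) (c : F) :
    ‖∑ t, ψ (a * t ^ 2 + b * t + c)‖ ≤ √(Fintype.card F) := by
  classical
  simp_rw [map_add_eq_mul ψ _ c, ← sum_mul, norm_mul, norm_apply, mul_one]
  by_cases ha : a = 0
  · have hb := hab.resolve_left (not_not.mpr ha)
    simp [ha, mul_comm b, sum_mulShift _ hψ, hb]
  · rw [← norm_sq_sum_quadratic hψ h2 ha b, Real.sqrt_sq (norm_nonneg _)]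

end Field

end AddChar

lemma sum_norm_sq_sum_mul_le_of_norm_inner_le {ι κ : Type*} [Fintype ι] [Fintype κ]
    [DecidableEq ι] (c : ι → ℂ) (k : ι → κ → ℂ) {a b : ℝ}
    (hk : ∀ i j, ‖∑ t, k i t * conj (k j t)‖ ≤ (if i = j then a else 0) + b) :
    ∑ t, ‖∑ i, c i * k i t‖ ^ 2 ≤ a * ∑ i, ‖c i‖ ^ 2 + b * (∑ i, ‖c i‖) ^ 2 := by
  have hexpand : ((∑ t, ‖∑ i, c i * k i t‖ ^ 2 : ℝ) : ℂ) =
      ∑ i, ∑ j, c i * conj (c j) * ∑ t, k i t * conj (k j t) := by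
    push_cast
    simp_rw [← Complex.mul_conj', map_sum, map_mul, sum_mul_sum, mul_sum]
    rw [sum_comm]
    refine sum_congr rfl fun i _ => ?_
    rw [sum_comm]
    refine sum_congr rfl fun j _ => sum_congr rfl fun t _ => by ring
  calc ∑ t, ‖∑ i, c i * k i t‖ ^ 2
      = ‖∑ i, ∑ j, c i * conj (c j) * ∑ t, k i t * conj (k j t)‖ := by
        rw [← hexpand, Complex.norm_real, Real.norm_of_nonneg (by positivity)]
    _ ≤ ∑ i, ∑ j, ‖c i‖ * ‖c j‖ * ((if i = j then a else 0) + b) := by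
        refine (norm_sum_le _ _).trans (sum_le_sum fun i _ => (norm_sum_le _ _).trans
          (sum_le_sum fun j _ => ?_))
        rw [norm_mul, norm_mul, Complex.norm_conj]
        exact mul_le_mul_of_nonneg_left (hk i j) (by positivity)
    _ = a * ∑ i, ‖c i‖ ^ 2 + b * (∑ i, ‖c i‖) ^ 2 := by
        simp_rw [mul_add, sum_add_distrib, mul_ite, mul_zero, sum_ite_eq, mem_univ, if_true,
          sq, sum_mul_sum, mul_sum]
        congr 1 <;> refine sum_congr rfl fun i _ => ?_
        · ring
        · exact sum_congr rfl fun j _ => by ring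

lemma sum_sum_sum_eq_sum_sum_sum_add {G M : Type*} [AddCommGroup G] [Fintype G]
    [AddCommMonoid M] (F : G → G → G → M) :
    ∑ s, ∑ n, ∑ m, F s n m = ∑ d, ∑ t, ∑ m, F (t + m) (m + d) m := by
  simp only [← Fintype.sum_prod_type']
  refine Fintype.sum_equiv
    { toFun := fun x => (x.2.1 - x.2.2, x.1 - x.2.2, x.2.2)
      invFun := fun y => (y.2.1 + y.2.2, y.2.2 + y.1, y.2.2)
      left_inv := fun x => by simp
      right_inv := fun y => by simp } _ _ fun x => ?_
  simp

lemma mul_two_add_sqrt_le {x : ℝ} (hx : 1 ≤ x) : x * (2 + √x) ≤ 3 * x ^ ((8 : ℝ) / 5) := by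
  have hsqrt : 1 ≤ √x := Real.one_le_sqrt.mpr hx
  have hpow : x * √x ≤ x ^ ((8 : ℝ) / 5) := by
    calc x * √x = x ^ ((3 : ℝ) / 2) := by
          rw [Real.sqrt_eq_rpow, ← Real.rpow_one_add' (by positivity) (by norm_num)]; norm_num
      _ ≤ x ^ ((8 : ℝ) / 5) := Real.rpow_le_rpow_of_exponent_le hx (by norm_num)
  nlinarith

noncomputable def twistedCorr (p : ℕ) [NeZero p] (f : ZMod p → ℂ) (d w : ZMod p) : ℂ :=
  ∑ x, f x * conj (f (x + w)) * ep p (x * d)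

noncomputable def kernelPair (p : ℕ) [NeZero p] (d m t : ZMod p) : ℂ :=
  Kq p (t - d) (m + d) * conj (Kq p t m)

noncomputable def kernelCorr (p : ℕ) [NeZero p] (B : ZMod p → ℂ) (d t : ZMod p) : ℂ :=
  ∑ m, B (m + d) * conj (B m) * kernelPair p d m t

section

variable {p : ℕ} [NeZero p]

lemma ep_eq_stdAddChar : ep p = ZMod.stdAddChar := by
  funext x; rw [ep, ZMod.stdAddChar_apply, ZMod.toCircle_apply]

lemma norm_Kq_le_one (x y : ZMod p) : ‖Kq p x y‖ ≤ 1 := by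
  unfold Kq; split_ifs <;> simp [ep_eq_stdAddChar]

lemma ft_sub_mul_conj_ft (f : ZMod p → ℂ) (d t : ZMod p) :
    ft p f (t - d) * conj (ft p f t) = (1 / p ^ 2) * ∑ w, twistedCorr p f d w * ep p (t * w) := by
  simp only [ft, twistedCorr, map_mul, map_sum, map_div₀, map_one, map_natCast, sum_mul,
    mul_sum, ep_eq_stdAddChar]
  rw [sum_comm]
  conv_rhs => rw [sum_comm]
  refine sum_congr rfl fun x _ => ?_
  refine (Fintype.sum_equiv (Equiv.addLeft x) _ _ fun w => ?_).symm
  have hphase : ZMod.stdAddChar (x * d) * ZMod.stdAddChar (t * w) =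
      ZMod.stdAddChar (-(x * (t - d))) * (ZMod.stdAddChar ((x + w) * t) : ℂ) := by
    simp only [← AddChar.map_add_eq_mul]; ring_nf
  simp only [Equiv.coe_addLeft, ← AddChar.map_neg_eq_conj, neg_neg]
  linear_combination (1 / (p : ℂ) ^ 2 * f x * conj (f (x + w))) * hphase

lemma sum_norm_sq_conv_eq (f B : ZMod p → ℂ) :
    ((∑ s, ‖∑ n, ft p f (s - n) * B n * Kq p (s - n) n‖ ^ 2 : ℝ) : ℂ) =
      (1 / p ^ 2) * ∑ d, ∑ w, twistedCorr p f d w * ∑ t, kernelCorr p B d t * ep p (t * w) := by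
  have hrhs : (1 / (p : ℂ) ^ 2) *
      ∑ d, ∑ w, twistedCorr p f d w * ∑ t, kernelCorr p B d t * ep p (t * w) =
      ∑ d, ∑ t, kernelCorr p B d t * (ft p f (t - d) * conj (ft p f t)) := by
    simp only [ft_sub_mul_conj_ft, mul_sum]
    refine sum_congr rfl fun d _ => ?_
    rw [sum_comm]
    exact sum_congr rfl fun t _ => sum_congr rfl fun w _ => by ring
  rw [hrhs]
  push_cast
  simp_rw [← Complex.mul_conj', map_sum, sum_mul_sum]
  rw [sum_sum_sum_eq_sum_sum_sum_add]
  simp only [kernelCorr, sum_mul]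
  refine sum_congr rfl fun d _ => sum_congr rfl fun t _ => sum_congr rfl fun m _ => ?_
  rw [show t + m - (m + d) = t - d by ring, add_sub_cancel_right, kernelPair]
  simp only [map_mul]
  ring

lemma sum_norm_sq_twistedCorr (f : ZMod p → ℂ) :
    ∑ d, ∑ w, ‖twistedCorr p f d w‖ ^ 2 = p * (∑ x, ‖f x‖ ^ 2) ^ 2 := by
  rw [sum_comm]
  simp only [twistedCorr, ep_eq_stdAddChar,
    AddChar.sum_norm_sq_sum_mul_apply_mul (ZMod.isPrimitive_stdAddChar p), ZMod.card, norm_mul,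
    Complex.norm_conj, mul_pow, ← mul_sum, sq (∑ x, ‖f x‖ ^ 2), sum_mul]
  rw [sum_comm]
  refine congrArg _ (sum_congr rfl fun x _ => ?_)
  rw [← mul_sum]
  exact congrArg _ (Fintype.sum_equiv (Equiv.addLeft x) _ _ fun w => rfl)

lemma sum_norm_sq_fourier (Φ : ZMod p → ℂ) :
    ∑ w, ‖∑ t, Φ t * ep p (t * w)‖ ^ 2 = p * ∑ t, ‖Φ t‖ ^ 2 := by
  rw [ep_eq_stdAddChar, AddChar.sum_norm_sq_sum_mul_apply_mul (ZMod.isPrimitive_stdAddChar p),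
    ZMod.card]

lemma sum_norm_sq_ft (f : ZMod p → ℂ) : ∑ z, ‖ft p f z‖ ^ 2 = nrm2 p f ^ 2 := by
  have hneg : ∑ z, ‖∑ x, ep p (-(x * z)) * f x‖ ^ 2 = p * ∑ x, ‖f x‖ ^ 2 := by
    rw [← sum_norm_sq_fourier]
    refine Fintype.sum_equiv (Equiv.neg _) _ _ fun z => ?_
    simp only [Equiv.neg_apply, mul_neg, mul_comm (ep p _)]
  have hp : (p : ℝ) ≠ 0 := Nat.cast_ne_zero.mpr (NeZero.ne p)
  simp only [ft, nrm2, norm_mul, mul_pow, ← mul_sum, hneg, norm_div, norm_one, Complex.norm_natCast]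
  rw [Real.sq_sqrt (by positivity)]
  field_simp

end

section Prime

variable {p : ℕ} [Fact p.Prime]

lemma norm_sum_kernelPair_mul_conj_le (hp2 : p ≠ 2) (d m m' : ZMod p) :
    ‖∑ t, kernelPair p d m t * conj (kernelPair p d m' t)‖ ≤
      (if m = m' then (p : ℝ) else 0) + (if d = 0 then (p : ℝ) else 0) + √p := by
  have htriv : ‖∑ t, kernelPair p d m t * conj (kernelPair p d m' t)‖ ≤ p := by
    have hK : ∀ t, ‖kernelPair p d m t * conj (kernelPair p d m' t)‖ ≤ 1 := fun t => by
      simp only [kernelPair, norm_mul, Complex.norm_conj]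
      exact mul_le_one₀ (mul_le_one₀ (norm_Kq_le_one _ _) (norm_nonneg _) (norm_Kq_le_one _ _))
        (by positivity) (mul_le_one₀ (norm_Kq_le_one _ _) (norm_nonneg _) (norm_Kq_le_one _ _))
    simpa using norm_sum_le_of_le univ fun t _ => hK t
  by_cases hmm : m = m'
  · subst hmm
    have := Real.sqrt_nonneg p
    rw [if_pos rfl]; split_ifs <;> linarith
  by_cases hd : d = 0
  · subst hd
    have := Real.sqrt_nonneg p
    rw [if_neg hmm, if_pos rfl]; linarith
  simp only [hmm, hd, if_false, zero_add]
  by_cases hQ : m + d = 0 ∨ m = 0 ∨ m' + d = 0 ∨ m' = 0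
  · have hzero : ∀ t, kernelPair p d m t * conj (kernelPair p d m' t) = 0 := fun t => by
      rcases hQ with h | h | h | h <;> simp [kernelPair, Kq, h]
    simp [hzero]
  push Not at hQ
  obtain ⟨hn, hm, hn', hm'⟩ := hQ
  have h2 : (2 : ZMod p) ≠ 0 := Ring.two_ne_zero (by rwa [ZMod.ringChar_zmod_n])
  have h4 : (4 : ZMod p) ≠ 0 := by
    rw [show (4 : ZMod p) = 2 * 2 by norm_num]; exact mul_ne_zero h2 h2
  set ι : ZMod p → ZMod p := fun z => (4 * z)⁻¹
  have hb : 2 * d * (ι (m + d) - ι (m' + d)) ≠ 0 := by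
    refine mul_ne_zero (mul_ne_zero h2 hd) (sub_ne_zero.mpr ?_)
    simp only [ι, Ne, inv_inj, mul_right_inj' h4, add_left_inj]
    exact hmm
  have hterm : ∀ t, kernelPair p d m t * conj (kernelPair p d m' t) = ZMod.stdAddChar
      ((ι (m' + d) - ι (m + d) + ι m - ι m') * t ^ 2 + 2 * d * (ι (m + d) - ι (m' + d)) * t
        + d ^ 2 * (ι (m' + d) - ι (m + d))) := fun t => by
    simp only [kernelPair, Kq, hn, hm, hn', hm', if_false, ep_eq_stdAddChar,
      ← AddChar.map_neg_eq_conj, ← AddChar.map_add_eq_mul]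
    congr 1
    ring
  simp_rw [hterm]
  exact (AddChar.norm_sum_quadratic_le (ZMod.isPrimitive_stdAddChar p) h2 (Or.inr hb) _).trans_eq
    (by rw [ZMod.card])

lemma sum_norm_sq_kernelCorr_le (hp2 : p ≠ 2) (B : ZMod p → ℂ) (d : ZMod p) :
    ∑ t, ‖kernelCorr p B d t‖ ^ 2 ≤ p * ∑ m, ‖B (m + d)‖ ^ 2 * ‖B m‖ ^ 2 +
      ((if d = 0 then (p : ℝ) else 0) + √p) * (∑ m, ‖B (m + d)‖ * ‖B m‖) ^ 2 := by
  have := sum_norm_sq_sum_mul_le_of_norm_inner_le (fun m => B (m + d) * conj (B m))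
    (kernelPair p d)
    fun m m' => (norm_sum_kernelPair_mul_conj_le hp2 d m m').trans_eq (add_assoc _ _ _)
  simpa [kernelCorr, norm_mul, mul_pow] using this

lemma sum_sum_norm_sq_kernelCorr_le (hp2 : p ≠ 2) (B : ZMod p → ℂ) :
    ∑ d, ∑ t, ‖kernelCorr p B d t‖ ^ 2 ≤ p * (2 + √p) * (∑ n, ‖B n‖ ^ 2) ^ 2 := by
  set N := ∑ n, ‖B n‖ ^ 2
  have hshift : ∀ m, ∑ d, ‖B (m + d)‖ ^ 2 = N := fun m =>
    Fintype.sum_equiv (Equiv.addLeft m) _ _ fun _ => rfl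
  have hdiag : ∑ d, ∑ m, ‖B (m + d)‖ ^ 2 * ‖B m‖ ^ 2 = N ^ 2 := by
    rw [sum_comm]
    simp only [← sum_mul, hshift]
    rw [← mul_sum, sq]
  have hcorr : ∀ d, (∑ m, ‖B (m + d)‖ * ‖B m‖) ^ 2 ≤ N ^ 2 := fun d => by
    refine (sum_mul_sq_le_sq_mul_sq _ _ _).trans_eq ?_
    rw [sq N, Fintype.sum_equiv (Equiv.addRight d) (fun m => ‖B (m + d)‖ ^ 2)
      (fun n => ‖B n‖ ^ 2) fun _ => rfl]
  calc ∑ d, ∑ t, ‖kernelCorr p B d t‖ ^ 2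
      ≤ ∑ d, (p * ∑ m, ‖B (m + d)‖ ^ 2 * ‖B m‖ ^ 2 +
          ((if d = 0 then (p : ℝ) else 0) + √p) * N ^ 2) := by
        gcongr with d
        refine (sum_norm_sq_kernelCorr_le hp2 B d).trans ?_
        have hweight : 0 ≤ (if d = 0 then (p : ℝ) else 0) + √p :=
          add_nonneg (by split_ifs <;> positivity) (Real.sqrt_nonneg _)
        exact add_le_add_right (mul_le_mul_of_nonneg_left (hcorr d) hweight) _
    _ = p * (2 + √p) * N ^ 2 := by
        simp only [sum_add_distrib, ← mul_sum, ← sum_mul, hdiag, sum_ite_eq', mem_univ, if_true,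
          sum_const, card_univ, ZMod.card, nsmul_eq_mul]
        ring

lemma sq_sum_norm_sq_conv_le (hp2 : p ≠ 2) (f B : ZMod p → ℂ) :
    (∑ s, ‖∑ n, ft p f (s - n) * B n * Kq p (s - n) n‖ ^ 2) ^ 2 ≤
      p * (2 + √p) * (nrm2 p f ^ 2 * ∑ n, ‖B n‖ ^ 2) ^ 2 := by
  set D := twistedCorr p f
  set M : ZMod p → ZMod p → ℂ := fun d w => ∑ t, kernelCorr p B d t * ep p (t * w)
  have hp : (0 : ℝ) < p := Nat.cast_pos.mpr (NeZero.pos p)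
  have hnorm : ∑ s, ‖∑ n, ft p f (s - n) * B n * Kq p (s - n) n‖ ^ 2 ≤
      1 / p ^ 2 * ∑ d, ∑ w, ‖D d w‖ * ‖M d w‖ := by
    have h0 : 0 ≤ ∑ s, ‖∑ n, ft p f (s - n) * B n * Kq p (s - n) n‖ ^ 2 := by positivity
    rw [← Real.norm_of_nonneg h0, ← Complex.norm_real,
      sum_norm_sq_conv_eq, norm_mul]
    simp only [norm_div, norm_one, norm_pow, Complex.norm_natCast]
    gcongr
    exact (norm_sum_le _ _).trans (sum_le_sum fun d _ =>
      (norm_sum_le _ _).trans_eq (sum_congr rfl fun w _ => norm_mul _ _))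
  have hCS : (∑ d, ∑ w, ‖D d w‖ * ‖M d w‖) ^ 2 ≤
      (∑ d, ∑ w, ‖D d w‖ ^ 2) * ∑ d, ∑ w, ‖M d w‖ ^ 2 := by
    have := sum_mul_sq_le_sq_mul_sq univ (fun q : ZMod p × ZMod p => ‖D q.1 q.2‖)
      fun q => ‖M q.1 q.2‖
    rwa [Fintype.sum_prod_type, Fintype.sum_prod_type, Fintype.sum_prod_type] at this
  have hM : ∑ d, ∑ w, ‖M d w‖ ^ 2 ≤ p * (p * (2 + √p) * (∑ n, ‖B n‖ ^ 2) ^ 2) := by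
    simp only [M, sum_norm_sq_fourier, ← mul_sum]
    exact mul_le_mul_of_nonneg_left (sum_sum_norm_sq_kernelCorr_le hp2 B) hp.le
  have hf : nrm2 p f ^ 2 = 1 / p * ∑ x, ‖f x‖ ^ 2 := Real.sq_sqrt (by positivity)
  calc (∑ s, ‖∑ n, ft p f (s - n) * B n * Kq p (s - n) n‖ ^ 2) ^ 2
      ≤ (1 / p ^ 2) ^ 2 * (∑ d, ∑ w, ‖D d w‖ * ‖M d w‖) ^ 2 := by
        rw [← mul_pow]; exact pow_le_pow_left₀ (by positivity) hnorm 2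
    _ ≤ (1 / p ^ 2) ^ 2 * ((p * (∑ x, ‖f x‖ ^ 2) ^ 2) *
          (p * (p * (2 + √p) * (∑ n, ‖B n‖ ^ 2) ^ 2))) := by
        rw [← sum_norm_sq_twistedCorr]
        gcongr
        exact hCS.trans (mul_le_mul_of_nonneg_left hM (by positivity))
    _ = p * (2 + √p) * (nrm2 p f ^ 2 * ∑ n, ‖B n‖ ^ 2) ^ 2 := by
        rw [hf]; field_simp

lemma sum_norm_sq_conv_ft_le (hp2 : p ≠ 2) (f₁ f₂ : ZMod p → ℂ) :
    ∑ s, ‖∑ n, ft p f₁ (s - n) * ft p f₂ n * Kq p (s - n) n‖ ^ 2 ≤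
      (2 * (p : ℝ) ^ ((2 : ℝ) / 5) * nrm2 p f₁ * nrm2 p f₂) ^ 2 := by
  set X := nrm2 p f₁ ^ 2 * nrm2 p f₂ ^ 2
  have hp1 : (1 : ℝ) ≤ p := Nat.one_le_cast.mpr (Fact.out : p.Prime).one_lt.le
  refine (pow_le_pow_iff_left₀ (by positivity) (by positivity) two_ne_zero).mp ?_
  calc _ ≤ p * (2 + √p) * X ^ 2 := by
        simpa only [sum_norm_sq_ft] using sq_sum_norm_sq_conv_le hp2 f₁ (ft p f₂)
    _ ≤ 3 * p ^ ((8 : ℝ) / 5) * X ^ 2 :=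
        mul_le_mul_of_nonneg_right (mul_two_add_sqrt_le hp1) (by positivity)
    _ ≤ 16 * ((p : ℝ) ^ ((2 : ℝ) / 5)) ^ 4 * X ^ 2 := by
        rw [← Real.rpow_natCast _ 4, ← Real.rpow_mul (by positivity)]
        gcongr <;> norm_num
    _ = ((2 * (p : ℝ) ^ ((2 : ℝ) / 5) * nrm2 p f₁ * nrm2 p f₂) ^ 2) ^ 2 := by ring

end Prime

theorem stmt9 : ∃ c : ℝ, 0 < c ∧ ∀ (p : ℕ) [NeZero p], p.Prime → p ≠ 2 →
    ∀ f₁ f₂ : ZMod p → ℂ,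
    (∑ s : ZMod p, ‖∑ n ∈ Finset.univ.filter (fun n : ZMod p => n ≠ 0),
        ft p f₁ (s - n) * ft p f₂ n * Kq p (s - n) n‖ ^ 2) ^ ((1 : ℝ) / 2) ≤
      c * (p : ℝ) ^ ((2 : ℝ) / 5) * nrm2 p f₁ * nrm2 p f₂ := by
  refine ⟨2, two_pos, fun p _ hp hp2 f₁ f₂ => ?_⟩
  have := Fact.mk hp
  have hfilter : ∀ s, ∑ n ∈ univ.filter (fun n : ZMod p => n ≠ 0),
      ft p f₁ (s - n) * ft p f₂ n * Kq p (s - n) n =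
      ∑ n, ft p f₁ (s - n) * ft p f₂ n * Kq p (s - n) n := fun s =>
    sum_filter_of_ne fun n _ h hn => h (by simp [hn, Kq])
  simp only [hfilter]
  rw [← Real.sqrt_eq_rpow, Real.sqrt_le_left (by unfold nrm2; positivity)]
  exact sum_norm_sq_conv_ft_le hp2 f₁ f₂
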